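/- (Value function of the switched LQ problem as a pointwise minimum of quadratics) For all k ∈ {0,...,N} and x ∈ ℝ^n, J_k^*(x) = min over P ∈ H_k of ½ xᵀ P x, where the sets H_k are defined by H_N = {Ψ} and H_k = {ρ_{i,k}(P) : P ∈ H_{k+1}, i ∈ Ω}. -/

import Mathlib

open Matrix

/-- State trajectory of the switched system started at `x` at time `k`. -/
noncomputable def slsTraj {n nu q : ℕ}
    (A : Fin q → Matrix (Fin n) (Fin n) ℝ)
    (B : Fin q → Matrix (Fin n) (Fin nu) ℝ)
    (σ : ℕ → Fin q) (u : ℕ → Fin nu → ℝ) (k : ℕ) (x : Fin n → ℝ) : ℕ → Fin n → ℝ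
  | 0 => x
  | t + 1 => A (σ (k + t)) *ᵥ slsTraj A B σ u k x t +
      B (σ (k + t)) *ᵥ u (k + t)

/-- Cost-to-go from time `k`, state `x`, under inputs `u, σ`. -/
noncomputable def slsCostToGo {n nu q : ℕ} (N : ℕ)
    (A : Fin q → Matrix (Fin n) (Fin n) ℝ)
    (B : Fin q → Matrix (Fin n) (Fin nu) ℝ)
    (Q : ℕ → Matrix (Fin n) (Fin n) ℝ) (R : ℕ → Matrix (Fin nu) (Fin nu) ℝ)
    (Ψ : Matrix (Fin n) (Fin n) ℝ)
    (k : ℕ) (x : Fin n → ℝ) (σ : ℕ → Fin q) (u : ℕ → Fin nu → ℝ) : ℝ :=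
  (1 / 2) * (slsTraj A B σ u k x (N - k) ⬝ᵥ Ψ *ᵥ slsTraj A B σ u k x (N - k)) +
    (1 / 2) * ∑ t ∈ Finset.range (N - k),
      (slsTraj A B σ u k x t ⬝ᵥ Q (k + t) *ᵥ slsTraj A B σ u k x t +
        u (k + t) ⬝ᵥ R (k + t) *ᵥ u (k + t))

/-- Value function (optimal cost-to-go) of the switched LQ problem. -/
noncomputable def slsValue {n nu q : ℕ} (N : ℕ)
    (A : Fin q → Matrix (Fin n) (Fin n) ℝ)
    (B : Fin q → Matrix (Fin n) (Fin nu) ℝ)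
    (Q : ℕ → Matrix (Fin n) (Fin n) ℝ) (R : ℕ → Matrix (Fin nu) (Fin nu) ℝ)
    (Ψ : Matrix (Fin n) (Fin n) ℝ)
    (k : ℕ) (x : Fin n → ℝ) : ℝ :=
  sInf {c : ℝ | ∃ (σ : ℕ → Fin q) (u : ℕ → Fin nu → ℝ),
    c = slsCostToGo N A B Q R Ψ k x σ u}

/-- Riccati map of mode `i` at time `k`. -/
noncomputable def riccatiMap {n nu q : ℕ}
    (A : Fin q → Matrix (Fin n) (Fin n) ℝ)
    (B : Fin q → Matrix (Fin n) (Fin nu) ℝ)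
    (Q : ℕ → Matrix (Fin n) (Fin n) ℝ) (R : ℕ → Matrix (Fin nu) (Fin nu) ℝ)
    (i : Fin q) (k : ℕ) (P : Matrix (Fin n) (Fin n) ℝ) : Matrix (Fin n) (Fin n) ℝ :=
  Q k + (A i)ᵀ * P * A i -
    (A i)ᵀ * P * B i * (R k + (B i)ᵀ * P * B i)⁻¹ * (B i)ᵀ * P * A i

/-- `slsH N ... j` is the set `H_{N-j}`: `slsH _ 0 = {Ψ}` and
`H_k = {ρ_{i,k}(P) : P ∈ H_{k+1}, i ∈ Ω}`. -/
noncomputable def slsH {n nu q : ℕ} (N : ℕ)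
    (A : Fin q → Matrix (Fin n) (Fin n) ℝ)
    (B : Fin q → Matrix (Fin n) (Fin nu) ℝ)
    (Q : ℕ → Matrix (Fin n) (Fin n) ℝ) (R : ℕ → Matrix (Fin nu) (Fin nu) ℝ)
    (Ψ : Matrix (Fin n) (Fin n) ℝ) : ℕ → Set (Matrix (Fin n) (Fin n) ℝ)
  | 0 => {Ψ}
  | j + 1 => {M | ∃ P ∈ slsH N A B Q R Ψ j, ∃ i : Fin q,
      M = riccatiMap A B Q R i (N - (j + 1)) P}


/-! Dynamic programming. Completing the square gives, for symmetric `P`, `R` with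
`S = R + BᵀPB` invertible,
`xᵀQx + uᵀRu + (Ax + Bu)ᵀP(Ax + Bu) = xᵀρ(P)x + (u - u*)ᵀS(u - u*)` with `u* = -S⁻¹BᵀPAx`.
For `P ⪰ 0` and `R ≻ 0` the last term is nonnegative and vanishes at `u = u*`. By backward
induction on `k`, every trajectory costs at least `½xᵀPx` for the `P ∈ H_k` obtained by applying
the Riccati maps of the modes it uses, and every `P ∈ H_k` is the exact cost of the modes that
built it driven by the inputs `u*`. Hence both sets of costs have the same infimum. -/

section CompleteSquare

variable {m p : Type*} [Fintype m] [Fintype p] [DecidableEq p]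

lemma mulVec_dotProduct_eq_dotProduct_transpose_mulVec {l : Type*} [Fintype l]
    (M : Matrix l m ℝ) (x : m → ℝ) (y : l → ℝ) : (M *ᵥ x) ⬝ᵥ y = x ⬝ᵥ (Mᵀ *ᵥ y) := by
  rw [dotProduct_comm, dotProduct_mulVec, mulVec_transpose, dotProduct_comm]

noncomputable def lqOptimalInput (A : Matrix m m ℝ) (B : Matrix m p ℝ) (R : Matrix p p ℝ)
    (P : Matrix m m ℝ) (x : m → ℝ) : p → ℝ :=
  -((R + Bᵀ * P * B)⁻¹ *ᵥ ((Bᵀ * P * A) *ᵥ x))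

theorem lq_completeSquare (A : Matrix m m ℝ) (B : Matrix m p ℝ) (Q : Matrix m m ℝ)
    (R : Matrix p p ℝ) (P : Matrix m m ℝ) (hP : Pᵀ = P) (hR : Rᵀ = R)
    (hS : IsUnit (R + Bᵀ * P * B).det) (x : m → ℝ) (u : p → ℝ) :
    x ⬝ᵥ Q *ᵥ x + u ⬝ᵥ R *ᵥ u + (A *ᵥ x + B *ᵥ u) ⬝ᵥ P *ᵥ (A *ᵥ x + B *ᵥ u)
      = x ⬝ᵥ (Q + Aᵀ * P * A - Aᵀ * P * B * (R + Bᵀ * P * B)⁻¹ * Bᵀ * P * A) *ᵥ x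
        + (u - lqOptimalInput A B R P x) ⬝ᵥ (R + Bᵀ * P * B) *ᵥ
            (u - lqOptimalInput A B R P x) := by
  rw [lqOptimalInput, sub_neg_eq_add]
  set S := R + Bᵀ * P * B with hSdef
  have hSsymm : Sᵀ = S := by simp [hSdef, hR, hP, Matrix.mul_assoc]
  have hSinv_symm : (S⁻¹)ᵀ = S⁻¹ := by rw [transpose_nonsing_inv, hSsymm]
  simp only [mulVec_add, add_mulVec, sub_mulVec, dotProduct_add, add_dotProduct,
    dotProduct_sub, mulVec_dotProduct_eq_dotProduct_transpose_mulVec, mulVec_mulVec,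
    transpose_mul, transpose_transpose, hP, hSinv_symm, Matrix.mul_assoc]
  simp only [← Matrix.mul_assoc, mul_nonsing_inv _ hS, nonsing_inv_mul _ hS, Matrix.one_mul,
    Matrix.mul_one]
  simp only [hSdef, add_mulVec, dotProduct_add]
  ring

end CompleteSquare

section Riccati

variable {n nu q : ℕ} (A : Fin q → Matrix (Fin n) (Fin n) ℝ)
  (B : Fin q → Matrix (Fin n) (Fin nu) ℝ) (Q : ℕ → Matrix (Fin n) (Fin n) ℝ)
  (R : ℕ → Matrix (Fin nu) (Fin nu) ℝ) (i : Fin q) (k : ℕ)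
  {P : Matrix (Fin n) (Fin n) ℝ}

lemma stageCost_eq_riccatiMap_add (hP : P.PosSemidef) (hR : (R k).PosDef) (x : Fin n → ℝ)
    (v : Fin nu → ℝ) :
    x ⬝ᵥ Q k *ᵥ x + v ⬝ᵥ R k *ᵥ v + (A i *ᵥ x + B i *ᵥ v) ⬝ᵥ P *ᵥ (A i *ᵥ x + B i *ᵥ v)
      = x ⬝ᵥ riccatiMap A B Q R i k P *ᵥ x
        + (v - lqOptimalInput (A i) (B i) (R k) P x) ⬝ᵥ (R k + (B i)ᵀ * P * B i) *ᵥ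
            (v - lqOptimalInput (A i) (B i) (R k) P x) :=
  have hS : (R k + (B i)ᵀ * P * B i).PosDef :=
    hR.add_posSemidef (hP.conjTranspose_mul_mul_same (B i))
  lq_completeSquare _ _ _ _ _ hP.isHermitian hR.isHermitian
    ((isUnit_iff_isUnit_det _).1 hS.isUnit) x v

lemma riccatiMap_le_stageCost (hP : P.PosSemidef) (hR : (R k).PosDef) (x : Fin n → ℝ)
    (v : Fin nu → ℝ) :
    x ⬝ᵥ riccatiMap A B Q R i k P *ᵥ x ≤
      x ⬝ᵥ Q k *ᵥ x + v ⬝ᵥ R k *ᵥ v + (A i *ᵥ x + B i *ᵥ v) ⬝ᵥ P *ᵥ (A i *ᵥ x + B i *ᵥ v) := by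
  have hS : (R k + (B i)ᵀ * P * B i).PosSemidef :=
    (hR.add_posSemidef (hP.conjTranspose_mul_mul_same (B i))).posSemidef
  rw [stageCost_eq_riccatiMap_add A B Q R i k hP hR]
  simpa using hS.dotProduct_mulVec_nonneg (v - lqOptimalInput (A i) (B i) (R k) P x)

lemma riccatiMap_eq_stageCost_lqOptimalInput (hP : P.PosSemidef) (hR : (R k).PosDef)
    (x : Fin n → ℝ) (v : Fin nu → ℝ) (hv : v = lqOptimalInput (A i) (B i) (R k) P x) :
    x ⬝ᵥ riccatiMap A B Q R i k P *ᵥ x =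
      x ⬝ᵥ Q k *ᵥ x + v ⬝ᵥ R k *ᵥ v + (A i *ᵥ x + B i *ᵥ v) ⬝ᵥ P *ᵥ (A i *ᵥ x + B i *ᵥ v) := by
  rw [stageCost_eq_riccatiMap_add A B Q R i k hP hR, hv, sub_self, zero_dotProduct, add_zero]

lemma riccatiMap_posSemidef (hQ : (Q k).PosSemidef) (hP : P.PosSemidef) (hR : (R k).PosDef) :
    (riccatiMap A B Q R i k P).PosSemidef := by
  have hRt : (R k)ᵀ = R k := hR.isHermitian
  have hPt : Pᵀ = P := hP.isHermitian
  have hQt : (Q k)ᵀ = Q k := hQ.isHermitian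
  refine .of_dotProduct_mulVec_nonneg ?_ fun x => ?_
  · simp only [IsHermitian, conjTranspose_eq_transpose_of_trivial, riccatiMap, transpose_sub,
      transpose_add, transpose_mul, transpose_transpose, transpose_nonsing_inv, hRt, hPt, hQt,
      Matrix.mul_assoc]
  · set v := lqOptimalInput (A i) (B i) (R k) P x
    rw [star_trivial, riccatiMap_eq_stageCost_lqOptimalInput A B Q R i k hP hR x v rfl]
    have hx := hQ.dotProduct_mulVec_nonneg x
    have hv := hR.posSemidef.dotProduct_mulVec_nonneg v
    have hnext := hP.dotProduct_mulVec_nonneg (A i *ᵥ x + B i *ᵥ v)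
    simp only [star_trivial] at hx hv hnext
    positivity

end Riccati

section Cost

variable {n nu q : ℕ} (N : ℕ) (A : Fin q → Matrix (Fin n) (Fin n) ℝ)
  (B : Fin q → Matrix (Fin n) (Fin nu) ℝ) (Q : ℕ → Matrix (Fin n) (Fin n) ℝ)
  (R : ℕ → Matrix (Fin nu) (Fin nu) ℝ) (Ψ : Matrix (Fin n) (Fin n) ℝ)
  (σ : ℕ → Fin q) (u : ℕ → Fin nu → ℝ) (k : ℕ) (x : Fin n → ℝ)

lemma slsTraj_succ_start (t : ℕ) :
    slsTraj A B σ u (k + 1) (A (σ k) *ᵥ x + B (σ k) *ᵥ u k) t = slsTraj A B σ u k x (t + 1) := by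
  induction t with
  | zero => rfl
  | succ t ih => simp only [slsTraj, ih, Nat.add_right_comm k 1 t, Nat.add_assoc]

lemma slsTraj_congr {σ' : ℕ → Fin q} {u' : ℕ → Fin nu → ℝ}
    (h : ∀ t ≥ k, σ t = σ' t ∧ u t = u' t) (t : ℕ) :
    slsTraj A B σ u k x t = slsTraj A B σ' u' k x t := by
  induction t with
  | zero => rfl
  | succ t ih =>
    obtain ⟨hσ, hu⟩ := h (k + t) (Nat.le_add_right k t)
    simp only [slsTraj, ih, hσ, hu]

lemma slsCostToGo_congr {σ' : ℕ → Fin q} {u' : ℕ → Fin nu → ℝ}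
    (h : ∀ t ≥ k, σ t = σ' t ∧ u t = u' t) :
    slsCostToGo N A B Q R Ψ k x σ u = slsCostToGo N A B Q R Ψ k x σ' u' := by
  simp only [slsCostToGo, slsTraj_congr A B σ u k x h]
  congr 2
  refine Finset.sum_congr rfl fun t _ => ?_
  rw [(h (k + t) (Nat.le_add_right k t)).2]

lemma slsCostToGo_self : slsCostToGo N A B Q R Ψ N x σ u = 1 / 2 * (x ⬝ᵥ Ψ *ᵥ x) := by
  simp [slsCostToGo, slsTraj]

lemma slsCostToGo_eq_stageCost_add (hk : k < N) :
    slsCostToGo N A B Q R Ψ k x σ u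
      = 1 / 2 * (x ⬝ᵥ Q k *ᵥ x + u k ⬝ᵥ R k *ᵥ u k)
        + slsCostToGo N A B Q R Ψ (k + 1) (A (σ k) *ᵥ x + B (σ k) *ᵥ u k) σ u := by
  obtain ⟨m, rfl⟩ : ∃ m, N = k + 1 + m := ⟨N - (k + 1), by omega⟩
  have hm : k + 1 + m - k = m + 1 := by omega
  simp only [slsCostToGo, hm, Nat.add_sub_cancel_left, Finset.sum_range_succ',
    ← slsTraj_succ_start A B σ u k x, ← Nat.add_assoc, Nat.add_right_comm k _ 1]
  simp only [slsTraj, add_zero]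
  ring

end Cost

section ValueFunction

variable {n nu q : ℕ} (N : ℕ) (A : Fin q → Matrix (Fin n) (Fin n) ℝ)
  (B : Fin q → Matrix (Fin n) (Fin nu) ℝ) {Q : ℕ → Matrix (Fin n) (Fin n) ℝ}
  {R : ℕ → Matrix (Fin nu) (Fin nu) ℝ} {Ψ : Matrix (Fin n) (Fin n) ℝ}

lemma slsH_posSemidef (hQ : ∀ k, (Q k).PosSemidef) (hΨ : Ψ.PosSemidef)
    (hR : ∀ k, (R k).PosDef) : ∀ j, ∀ P ∈ slsH N A B Q R Ψ j, P.PosSemidef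
  | 0, _, rfl => hΨ
  | j + 1, _, ⟨P, hP, i, hM⟩ =>
    hM ▸ riccatiMap_posSemidef A B Q R i _ (hQ _) (slsH_posSemidef hQ hΨ hR j P hP) (hR _)

lemma exists_mem_slsH_le_slsCostToGo (hQ : ∀ k, (Q k).PosSemidef) (hΨ : Ψ.PosSemidef)
    (hR : ∀ k, (R k).PosDef) (j : ℕ) (hj : j ≤ N) (x : Fin n → ℝ) (σ : ℕ → Fin q)
    (u : ℕ → Fin nu → ℝ) :
    ∃ P ∈ slsH N A B Q R Ψ j, 1 / 2 * (x ⬝ᵥ P *ᵥ x) ≤ slsCostToGo N A B Q R Ψ (N - j) x σ u := by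
  induction j generalizing x with
  | zero => exact ⟨Ψ, rfl, (slsCostToGo_self N A B Q R Ψ σ u x).ge⟩
  | succ j ih =>
    set k := N - (j + 1)
    have hk : k + 1 = N - j := by omega
    obtain ⟨P, hP, hle⟩ := ih (by omega) (A (σ k) *ᵥ x + B (σ k) *ᵥ u k)
    refine ⟨riccatiMap A B Q R (σ k) k P, ⟨P, hP, σ k, rfl⟩, ?_⟩
    have hstage := riccatiMap_le_stageCost A B Q R (σ k) k
      (slsH_posSemidef N A B hQ hΨ hR j P hP) (hR k) x (u k)
    rw [slsCostToGo_eq_stageCost_add N A B Q R Ψ σ u k x (by omega), hk]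
    linarith

lemma exists_slsCostToGo_eq_of_mem_slsH (hq : 0 < q) (hQ : ∀ k, (Q k).PosSemidef)
    (hΨ : Ψ.PosSemidef) (hR : ∀ k, (R k).PosDef) (j : ℕ) (hj : j ≤ N) (x : Fin n → ℝ)
    (P : Matrix (Fin n) (Fin n) ℝ) (hP : P ∈ slsH N A B Q R Ψ j) :
    ∃ (σ : ℕ → Fin q) (u : ℕ → Fin nu → ℝ),
      slsCostToGo N A B Q R Ψ (N - j) x σ u = 1 / 2 * (x ⬝ᵥ P *ᵥ x) := by
  induction j generalizing x P with
  | zero =>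
    obtain rfl : P = Ψ := hP
    exact ⟨fun _ => ⟨0, hq⟩, fun _ => 0, slsCostToGo_self N A B Q R P _ _ x⟩
  | succ j ih =>
    obtain ⟨P', hP', i, rfl⟩ := hP
    set k := N - (j + 1)
    have hk : k + 1 = N - j := by omega
    set v := lqOptimalInput (A i) (B i) (R k) P' x
    obtain ⟨σ, u, hcost⟩ := ih (by omega) (A i *ᵥ x + B i *ᵥ v) P' hP'
    refine ⟨Function.update σ k i, Function.update u k v, ?_⟩
    have htail : ∀ t ≥ k + 1, Function.update σ k i t = σ t ∧ Function.update u k v t = u t :=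
      fun t ht => ⟨Function.update_of_ne (by omega) _ _, Function.update_of_ne (by omega) _ _⟩
    have hstage := riccatiMap_eq_stageCost_lqOptimalInput A B Q R i k
      (slsH_posSemidef N A B hQ hΨ hR j P' hP') (hR k) x v rfl
    rw [slsCostToGo_eq_stageCost_add N A B Q R Ψ _ _ k x (by omega), Function.update_self,
      Function.update_self, slsCostToGo_congr N A B Q R Ψ _ _ (k + 1) _ htail, hk, hcost]
    linarith

end ValueFunction

theorem stmt_9 (n nu q N : ℕ) (hq : 0 < q)
    (A : Fin q → Matrix (Fin n) (Fin n) ℝ)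
    (B : Fin q → Matrix (Fin n) (Fin nu) ℝ)
    (Q : ℕ → Matrix (Fin n) (Fin n) ℝ) (R : ℕ → Matrix (Fin nu) (Fin nu) ℝ)
    (Ψ : Matrix (Fin n) (Fin n) ℝ)
    (hQ : ∀ k, (Q k).PosSemidef) (hΨ : Ψ.PosSemidef) (hR : ∀ k, (R k).PosDef) :
    ∀ k ≤ N, ∀ x : Fin n → ℝ,
      slsValue N A B Q R Ψ k x =
        sInf {c : ℝ | ∃ P ∈ slsH N A B Q R Ψ (N - k),
          c = (1 / 2) * (x ⬝ᵥ P *ᵥ x)} := by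
  intro k hk x
  have hNk : N - (N - k) = k := Nat.sub_sub_self hk
  apply csInf_eq_csInf_of_forall_exists_le
  · rintro _ ⟨σ, u, rfl⟩
    obtain ⟨P, hP, hle⟩ :=
      exists_mem_slsH_le_slsCostToGo N A B hQ hΨ hR (N - k) (Nat.sub_le N k) x σ u
    exact ⟨_, ⟨P, hP, rfl⟩, hNk ▸ hle⟩
  · rintro _ ⟨P, hP, rfl⟩
    obtain ⟨σ, u, hcost⟩ :=
      exists_slsCostToGo_eq_of_mem_slsH N A B hq hQ hΨ hR (N - k) (Nat.sub_le N k) x P hP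
    exact ⟨_, ⟨σ, u, rfl⟩, (hNk ▸ hcost).le⟩
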